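/- The set of Demazure roots belonging to a ray generator ρ_i, S_i ∩ M = {e ∈ M : ⟨ρ_i,e⟩ = −1 and ⟨ρ_j,e⟩ ≥ 0 for all j ≠ i}, is a finitely generated module over the monoid τ_i ∩ M = {f ∈ M : ⟨ρ_i,f⟩ = 0, ⟨ρ_j,f⟩ ≥ 0 for all j ≠ i}; moreover for any f ∈ τ_i ∩ M and any e ∈ S_i ∩ M, χ^f · ∂_{ρ_i,e} = ∂_{ρ_i,e+f} is a locally nilpotent derivation. -/

import Mathlib

/-- The homogeneous derivation `∂_{ρ,e}` of the (semi)group algebra, defined on the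
monomial basis by `∂_{ρ,e}(χ^m) = ⟨ρ,m⟩ χ^{m+e}`. -/
noncomputable def homDer (K : Type*) [Field K] {M : Type*} [AddCommGroup M]
    (ρ : M →+ ℤ) (e : M) :
    AddMonoidAlgebra K M →ₗ[K] AddMonoidAlgebra K M :=
  (Finsupp.lsum K fun m =>
    LinearMap.toSpanSingleton K (AddMonoidAlgebra K M)
      ((ρ m : ℤ) • AddMonoidAlgebra.single (m + e) (1 : K))) ∘ₗ
    (AddMonoidAlgebra.coeffLinearEquiv K).toLinearMap

/-- The set of Demazure roots belonging to the ray generator `ρ_i`: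
`S_i ∩ M = {e | ⟨ρ_i,e⟩ = −1, ⟨ρ_j,e⟩ ≥ 0 ∀ j ≠ i}`. -/
def IsDemazureRootAt {M : Type*} [AddCommGroup M] {k : ℕ}
    (ρs : Fin k → (M →+ ℤ)) (i : Fin k) (e : M) : Prop :=
  ρs i e = -1 ∧ ∀ j, j ≠ i → 0 ≤ ρs j e

/-- The monoid `τ_i ∩ M = {f | ⟨ρ_i,f⟩ = 0, ⟨ρ_j,f⟩ ≥ 0 ∀ j ≠ i}`. -/
def InFacetMonoid {M : Type*} [AddCommGroup M] {k : ℕ}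
    (ρs : Fin k → (M →+ ℤ)) (i : Fin k) (f : M) : Prop :=
  ρs i f = 0 ∧ ∀ j, j ≠ i → 0 ≤ ρs j f

theorem exists_finset_subset_forall_exists_le {ι α : Type*} [PartialOrder α]
    [WellQuasiOrderedLE α] (f : ι → α) (s : Set ι) :
    ∃ t : Finset ι, ↑t ⊆ s ∧ ∀ a ∈ s, ∃ b ∈ t, f b ≤ f a := by
  classical
  have hfin : {x | Minimal (· ∈ f '' s) x}.Finite :=
    WellQuasiOrderedLE.finite_of_isAntichain (setOfPred_minimal_antichain _)
  obtain ⟨t, hts, himage⟩ :=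
    Finset.subset_set_image_iff.mp (show ↑hfin.toFinset ⊆ f '' s from fun x hx =>
      (hfin.mem_toFinset.mp hx).prop)
  refine ⟨t, hts, fun a ha => ?_⟩
  obtain ⟨c, hca, hc⟩ := (Set.isPWO_of_wellQuasiOrderedLE (f '' s)).exists_le_minimal
    (Set.mem_image_of_mem f ha)
  obtain ⟨b, hbt, rfl⟩ := Finset.mem_image.mp (himage ▸ hfin.mem_toFinset.mpr hc)
  exact ⟨b, hbt, hca⟩

section DemazureRoots

variable {M : Type*} [AddCommGroup M] {k : ℕ} {ρs : Fin k → (M →+ ℤ)} {i : Fin k}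

theorem IsDemazureRootAt.add_of_inFacetMonoid {e f : M} (he : IsDemazureRootAt ρs i e)
    (hf : InFacetMonoid ρs i f) : IsDemazureRootAt ρs i (e + f) :=
  ⟨by rw [map_add, he.1, hf.1, add_zero], fun j hj => by
    rw [map_add]; exact add_nonneg (he.2 j hj) (hf.2 j hj)⟩

theorem IsDemazureRootAt.inFacetMonoid_sub {e g : M} (he : IsDemazureRootAt ρs i e)
    (hg : IsDemazureRootAt ρs i g) (hle : ∀ j, j ≠ i → ρs j g ≤ ρs j e) :
    InFacetMonoid ρs i (e - g) :=
  ⟨by rw [map_sub, he.1, hg.1, sub_self], fun j hj => by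
    rw [map_sub, sub_nonneg]; exact hle j hj⟩

variable (ρs i)

/-- Dickson's lemma applied to the vectors `(⟨ρ_j, e⟩)_j ∈ ℕ^k` of the roots `e`: every root
dominates one of the finitely many roots whose vectors are minimal, and the difference lies in
`τ_i ∩ M`. -/
theorem exists_finset_isDemazureRootAt_iff :
    ∃ G : Finset M, (∀ g ∈ G, IsDemazureRootAt ρs i g) ∧
      ∀ e : M, IsDemazureRootAt ρs i e ↔
        ∃ g ∈ G, ∃ f : M, InFacetMonoid ρs i f ∧ e = g + f := by
  obtain ⟨G, hGS, hG⟩ := exists_finset_subset_forall_exists_le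
    (fun e j => (ρs j e).toNat) {e | IsDemazureRootAt ρs i e}
  refine ⟨G, fun g hg => hGS hg, fun e => ⟨fun he => ?_, ?_⟩⟩
  · obtain ⟨g, hgG, hle⟩ := hG e he
    have hg : IsDemazureRootAt ρs i g := hGS hgG
    refine ⟨g, hgG, e - g, he.inFacetMonoid_sub hg fun j hj => ?_, (add_sub_cancel _ _).symm⟩
    have hle_j : (ρs j g).toNat ≤ (ρs j e).toNat := hle j
    have := he.2 j hj
    omega
  · rintro ⟨g, hgG, f, hf, rfl⟩
    exact (hGS hgG : IsDemazureRootAt ρs i g).add_of_inFacetMonoid hf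

end DemazureRoots

section HomDer

open AddMonoidAlgebra

variable {K : Type*} [Field K] {M : Type*} [AddCommGroup M] (ρ : M →+ ℤ)

theorem homDer_single (e m : M) (b : K) :
    homDer K ρ e (single m b) = single (m + e) (b * (ρ m : K)) := by
  simp [homDer, AddMonoidAlgebra.smul_single]

theorem coeff_homDer_apply (e : M) (x : AddMonoidAlgebra K M) (m : M) :
    (homDer K ρ e x).coeff m = x.coeff (m - e) * (ρ (m - e) : K) := by
  classical
  induction x using AddMonoidAlgebra.induction_linear with
  | zero => simp
  | add x y hx hy => simp only [map_add, coeff_add, Finsupp.add_apply, hx, hy, add_mul]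
  | single m₀ b =>
    rw [homDer_single, coeff_single, coeff_single, Finsupp.single_apply, Finsupp.single_apply]
    by_cases h : m₀ = m - e
    · simp [h]
    · rw [if_neg h, if_neg (by rintro rfl; simp at h), zero_mul]

theorem single_mul_homDer (e f : M) (x : AddMonoidAlgebra K M) :
    single f (1 : K) * homDer K ρ e x = homDer K ρ (e + f) x := by
  induction x using AddMonoidAlgebra.induction_linear with
  | zero => simp
  | add x y hx hy => rw [map_add, map_add, mul_add, hx, hy]
  | single m b =>
    rw [homDer_single, homDer_single, single_mul_single, one_mul, add_left_comm, add_comm f]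

/-- `∂_{ρ,d}` with `⟨ρ,d⟩ = -1` lowers the `ρ`-degree of every monomial by one and kills the
monomials of degree `0`. -/
theorem iterate_homDer_eq_zero_of_forall_lt {d : M} (hd : ρ d = -1) (b : ℕ)
    (x : AddMonoidAlgebra K M) (hx : ∀ m ∈ x.coeff.support, 0 ≤ ρ m ∧ ρ m < b) :
    (homDer K ρ d)^[b] x = 0 := by
  induction b generalizing x with
  | zero =>
    rw [Function.iterate_zero_apply, ← coeff_eq_zero, ← Finsupp.support_eq_empty]
    exact Finset.eq_empty_of_forall_notMem fun m hm => by have := hx m hm; omega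
  | succ b ih =>
    rw [Function.iterate_succ_apply]
    refine ih _ fun m hm => ?_
    rw [Finsupp.mem_support_iff, coeff_homDer_apply] at hm
    obtain ⟨hx_ne, hρ_ne⟩ := mul_ne_zero_iff.mp hm
    have hρ : ρ (m - d) ≠ 0 := fun h => hρ_ne (by rw [h, Int.cast_zero])
    have := hx (m - d) (Finsupp.mem_support_iff.mpr hx_ne)
    rw [map_sub, hd] at this hρ
    omega

theorem exists_iterate_homDer_eq_zero {d : M} (hd : ρ d = -1) (x : AddMonoidAlgebra K M)
    (hx : ∀ m ∈ x.coeff.support, 0 ≤ ρ m) : ∃ N : ℕ, (homDer K ρ d)^[N] x = 0 := by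
  refine ⟨x.coeff.support.sup (fun m => (ρ m).toNat) + 1,
    iterate_homDer_eq_zero_of_forall_lt ρ hd _ x fun m hm => ⟨hx m hm, ?_⟩⟩
  have := Finset.le_sup (f := fun m => (ρ m).toNat) hm
  omega

end HomDer

theorem stmt10_general {K : Type*} [Field K] (n k : ℕ)
    (ρs : Fin k → ((Fin n → ℤ) →+ ℤ)) (i : Fin k) :
    (∃ G : Finset (Fin n → ℤ), (∀ g ∈ G, IsDemazureRootAt ρs i g) ∧
        ∀ e : Fin n → ℤ, IsDemazureRootAt ρs i e ↔
          ∃ g ∈ G, ∃ f : Fin n → ℤ, InFacetMonoid ρs i f ∧ e = g + f)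
    ∧ ∀ (f e : Fin n → ℤ), InFacetMonoid ρs i f → IsDemazureRootAt ρs i e →
        (∀ x : AddMonoidAlgebra K (Fin n → ℤ),
          AddMonoidAlgebra.single f (1 : K) * homDer K (ρs i) e x
            = homDer K (ρs i) (e + f) x)
        ∧ ∀ x : AddMonoidAlgebra K (Fin n → ℤ),
            (∀ m ∈ x.coeff.support, ∀ j, 0 ≤ ρs j m) →
            ∃ N : ℕ, (⇑(homDer K (ρs i) (e + f)))^[N] x = 0 :=
  ⟨exists_finset_isDemazureRootAt_iff ρs i, fun f e hf he =>
    ⟨single_mul_homDer (ρs i) e f, fun x hx =>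
      exists_iterate_homDer_eq_zero (ρs i) (he.add_of_inFacetMonoid hf).1 x fun m hm => hx m hm i⟩⟩

/-- `S_i ∩ M` is a finitely generated module over the monoid `τ_i ∩ M`;
moreover, for any `f ∈ τ_i ∩ M` and `e ∈ S_i ∩ M`, `χ^f · ∂_{ρ_i,e} = ∂_{ρ_i,e+f}` and
this is a locally nilpotent derivation of the semigroup algebra of the cone. -/
theorem stmt10 {K : Type*} [Field K] [CharZero K] (n k : ℕ)
    (ρs : Fin k → ((Fin n → ℤ) →+ ℤ)) (i : Fin k) :
    (∃ G : Finset (Fin n → ℤ), (∀ g ∈ G, IsDemazureRootAt ρs i g) ∧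
        ∀ e : Fin n → ℤ, IsDemazureRootAt ρs i e ↔
          ∃ g ∈ G, ∃ f : Fin n → ℤ, InFacetMonoid ρs i f ∧ e = g + f)
    ∧ ∀ (f e : Fin n → ℤ), InFacetMonoid ρs i f → IsDemazureRootAt ρs i e →
        (∀ x : AddMonoidAlgebra K (Fin n → ℤ),
          AddMonoidAlgebra.single f (1 : K) * homDer K (ρs i) e x
            = homDer K (ρs i) (e + f) x)
        ∧ ∀ x : AddMonoidAlgebra K (Fin n → ℤ),
            (∀ m ∈ x.coeff.support, ∀ j, 0 ≤ ρs j m) →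
            ∃ N : ℕ, (⇑(homDer K (ρs i) (e + f)))^[N] x = 0 :=
  stmt10_general n k ρs i
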